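/- For every ξ ∈ ℝ, the function g_ξ has a double critical point at ω = i, i.e. g_ξ′(i) = 0 and g_ξ″(i) = 0, if and only if ξ = -(1/2)√(1-2c). -/

import Mathlib

/-- `c = a/(1+a²)`. -/
noncomputable def cOf (a : ℝ) : ℝ := a / (1 + a ^ 2)

/-- The branch of the logarithm with argument in `(-π/2, 3π/2]`:
`L(z) = Log(-iz) + iπ/2` where `Log` is the principal branch. -/
noncomputable def Lbr (z : ℂ) : ℂ :=
  Complex.log (-Complex.I * z) + Complex.I * ((Real.pi : ℂ) / 2)

/-- The branch `√(ω² + 2c) = exp((1/2)L(ω + i√(2c)) + (1/2)L(ω - i√(2c)))`. -/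
noncomputable def sqBr (a : ℝ) (ω : ℂ) : ℂ :=
  Complex.exp ((1 / 2 : ℂ) * Lbr (ω + Complex.I * (Real.sqrt (2 * cOf a) : ℂ)) +
    (1 / 2 : ℂ) * Lbr (ω - Complex.I * (Real.sqrt (2 * cOf a) : ℂ)))

/-- `G(ω) = (ω - √(ω² + 2c))/√(2c)`. -/
noncomputable def Gbr (a : ℝ) (ω : ℂ) : ℂ :=
  (ω - sqBr a ω) / (Real.sqrt (2 * cOf a) : ℂ)

/-- The branch cuts `𝒞 = i·((-∞, -1/√(2c)] ∪ [-√(2c), √(2c)] ∪ [1/√(2c), ∞))`. -/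
def cuts (a : ℝ) : Set ℂ :=
  {z : ℂ | ∃ t : ℝ, z = Complex.I * (t : ℂ) ∧
    (t ≤ -(1 / Real.sqrt (2 * cOf a)) ∨
      (-Real.sqrt (2 * cOf a) ≤ t ∧ t ≤ Real.sqrt (2 * cOf a)) ∨
      1 / Real.sqrt (2 * cOf a) ≤ t)}

/-- The branch of the logarithm with argument in `(0, 2π]`: `L₃(z) = Log(-z) + iπ`. -/
noncomputable def L3 (z : ℂ) : ℂ := Complex.log (-z) + Complex.I * (Real.pi : ℂ)

/-- The saddle point function `g_ξ(ω) = L(ω) - ξ·L(G(ω)) + ξ·L₃(G(1/ω))`. -/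
noncomputable def gxi (a ξ : ℝ) (ω : ℂ) : ℂ :=
  Lbr ω - (ξ : ℂ) * Lbr (Gbr a ω) + (ξ : ℂ) * L3 (Gbr a ω⁻¹)

/-- The saddle point equation `1 + ξ₁·ω/√(ω²+2c) + ξ₂/(ω·√(ω⁻²+2c)) = 0`. -/
def saddleEq (a ξ₁ ξ₂ : ℝ) (ω : ℂ) : Prop :=
  1 + (ξ₁ : ℂ) * ω / sqBr a ω + (ξ₂ : ℂ) / (ω * sqBr a ω⁻¹) = 0

/-!
Near `ω = i` both square roots entering `g_ξ` are analytic: `sqBr` has no cut in `Im z > √(2c)`,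
and in `Im z < -√(2c)` the jumps of its two logarithms cancel, so that `sqBr (-z) = -sqBr z`.
For any branch `S` of `√(z² + 2c)` with `S' = z / S`, and any branch of the logarithm,
`(log G)' = -1 / S`. Hence near `i`
`g_ξ'(ω) = 1/ω + ξ / S(ω) + ξ / (ω² S(1/ω))`, and `S(±i) = ±i√(1-2c)` gives
`g_ξ'(i) = -i (1 + 2ξ/√(1-2c))` and `g_ξ''(i) = 1 + 2ξ/√(1-2c)`.
-/

open Complex Topology

theorem cOf_pos {a : ℝ} (ha : 0 < a) : 0 < cOf a := div_pos ha (by positivity)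

theorem two_mul_cOf_lt_one {a : ℝ} (ha : a ≠ 1) : 2 * cOf a < 1 := by
  rw [cOf, mul_div_assoc', div_lt_one (by positivity)]
  nlinarith [sq_pos_of_ne_zero (sub_ne_zero.2 ha)]

theorem log_neg_eq_log_add_mul_I {u : ℂ} {θ : ℝ} (h : arg (-u) = arg u + θ) :
    log (-u) = log u + θ * I :=
  Complex.ext (by simp [log_re]) (by simp [log_im, h])

theorem exp_half_log_neg_add_half_log_neg {u v : ℂ} (hu : 0 < u.re) (hv : 0 < v.re)
    (huv : u.im = v.im) :
    cexp (1 / 2 * log (-u) + 1 / 2 * log (-v)) = -cexp (1 / 2 * log u + 1 / 2 * log v) := by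
  obtain ⟨θ, hθ, hu', hv'⟩ : ∃ θ : ℝ, cexp (θ * I) = -1 ∧
      arg (-u) = arg u + θ ∧ arg (-v) = arg v + θ := by
    rcases lt_or_ge 0 u.im with h | h
    · refine ⟨-Real.pi, by simp [neg_mul, exp_neg, exp_pi_mul_I], ?_, ?_⟩
      · rw [arg_neg_eq_arg_sub_pi_of_im_pos h, sub_eq_add_neg]
      · rw [arg_neg_eq_arg_sub_pi_of_im_pos (huv ▸ h), sub_eq_add_neg]
    · refine ⟨Real.pi, exp_pi_mul_I, arg_neg_eq_arg_add_pi_iff.2 ?_, arg_neg_eq_arg_add_pi_iff.2 ?_⟩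
      · exact h.lt_or_eq.imp id fun h0 => ⟨h0, hu⟩
      · exact (huv ▸ h).lt_or_eq.imp id fun h0 => ⟨h0, hv⟩
  rw [log_neg_eq_log_add_mul_I hu', log_neg_eq_log_add_mul_I hv',
    show 1 / 2 * (log u + θ * I) + 1 / 2 * (log v + θ * I) =
      (1 / 2 * log u + 1 / 2 * log v) + θ * I by ring, exp_add, hθ, mul_neg_one]

theorem exp_half_log_add_half_log_ofReal {x y : ℝ} (hx : 0 < x) (hy : 0 < y) :
    cexp (1 / 2 * log x + 1 / 2 * log y) = (√(x * y) : ℂ) := by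
  rw [← ofReal_log hx.le, ← ofReal_log hy.le,
    show 1 / 2 * (Real.log x : ℂ) + 1 / 2 * (Real.log y : ℂ)
      = ((Real.log x + Real.log y) / 2 : ℝ) by push_cast; ring,
    ← ofReal_exp, Real.exp_half, Real.exp_add, Real.exp_log hx, Real.exp_log hy]

theorem exp_Lbr {z : ℂ} (hz : z ≠ 0) : cexp (Lbr z) = z := by
  rw [Lbr, exp_add, exp_log (by simpa using hz), show I * (Real.pi / 2) = Real.pi / 2 * I by ring,
    exp_pi_div_two_mul_I]
  linear_combination (-z) * I_sq

theorem hasDerivAt_Lbr {z : ℂ} (hz : -I * z ∈ slitPlane) : HasDerivAt Lbr z⁻¹ z := by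
  have hz0 : z ≠ 0 := by rintro rfl; simp at hz
  refine (((hasDerivAt_id' z).const_mul (-I)).clog hz |>.add_const _).congr_deriv ?_
  field_simp

theorem hasDerivAt_L3 {z : ℂ} (hz : -z ∈ slitPlane) : HasDerivAt L3 z⁻¹ z := by
  have hz0 : z ≠ 0 := by rintro rfl; simp at hz
  refine ((hasDerivAt_neg z).clog hz |>.add_const _).congr_deriv ?_
  field_simp

section Branches

variable {a : ℝ}

theorem sqBr_ne_zero (z : ℂ) : sqBr a z ≠ 0 := exp_ne_zero _

theorem sqBr_eq (z : ℂ) :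
    sqBr a z = I * cexp (1 / 2 * log (-I * (z + I * √(2 * cOf a))) +
      1 / 2 * log (-I * (z - I * √(2 * cOf a)))) := by
  rw [sqBr, Lbr, Lbr, show ∀ p q : ℂ,
      1 / 2 * (p + I * (Real.pi / 2)) + 1 / 2 * (q + I * (Real.pi / 2)) =
        (1 / 2 * p + 1 / 2 * q) + Real.pi / 2 * I from fun p q => by ring,
    exp_add, exp_pi_div_two_mul_I, mul_comm]

theorem sqBr_sq (hc : 0 ≤ cOf a) {z : ℂ} (hp : z + I * √(2 * cOf a) ≠ 0)
    (hm : z - I * √(2 * cOf a) ≠ 0) : sqBr a z ^ 2 = z ^ 2 + 2 * cOf a := by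
  have hs : ((√(2 * cOf a) : ℝ) : ℂ) ^ 2 = 2 * cOf a := by
    exact_mod_cast Real.sq_sqrt (by linarith)
  rw [sqBr, sq, ← exp_add, show ∀ p q : ℂ, 1 / 2 * p + 1 / 2 * q + (1 / 2 * p + 1 / 2 * q) = p + q
    from fun p q => by ring, exp_add, exp_Lbr hp, exp_Lbr hm]
  linear_combination (-(√(2 * cOf a) : ℂ) ^ 2) * I_sq + hs

/-- Both logarithms in `sqBr` cross their cut between `z` and `-z`; the two jumps cancel. -/
theorem sqBr_neg {z : ℂ} (hz : √(2 * cOf a) < z.im) : sqBr a (-z) = -sqBr a z := by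
  set s : ℝ := √(2 * cOf a)
  have hs : 0 ≤ s := Real.sqrt_nonneg _
  have key := exp_half_log_neg_add_half_log_neg (u := -I * (z - I * s)) (v := -I * (z + I * s))
    (by simp; linarith) (by simp; linarith) (by simp)
  rw [sqBr_eq, sqBr_eq, show -I * (-z + I * s) = -(-I * (z - I * s)) by ring,
    show -I * (-z - I * s) = -(-I * (z + I * s)) by ring, key, add_comm]
  ring

theorem hasDerivAt_sqBr_of_lt_im (hc : 0 ≤ cOf a) {z : ℂ} (hz : √(2 * cOf a) < z.im) :
    HasDerivAt (sqBr a) (z / sqBr a z) z := by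
  set s : ℝ := √(2 * cOf a)
  have hs : 0 ≤ s := Real.sqrt_nonneg _
  have hp : -I * (z + I * s) ∈ slitPlane := by
    rw [mem_slitPlane_iff]; left; simp; linarith
  have hm : -I * (z - I * s) ∈ slitPlane := by
    rw [mem_slitPlane_iff]; left; simp; linarith
  have hzp : z + I * s ≠ 0 := by rintro h; simp [h] at hp
  have hzm : z - I * s ≠ 0 := by rintro h; simp [h] at hm
  have dp := (hasDerivAt_Lbr hp).comp_add_const z (I * s)
  have dm := (hasDerivAt_Lbr hm).comp_sub_const z (I * s)
  refine ((dp.const_mul (1 / 2)).add (dm.const_mul (1 / 2))).cexp.congr_deriv ?_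
  have hS := sqBr_sq hc hzp hzm
  have hs2 : (s : ℂ) ^ 2 = 2 * cOf a := by exact_mod_cast Real.sq_sqrt (by linarith)
  have hS0 : sqBr a z ≠ 0 := sqBr_ne_zero z
  change sqBr a z * _ = _
  field_simp
  linear_combination (2 * z) * hS - (2 * z) * hs2 + (2 * z * (s : ℂ) ^ 2) * I_sq

theorem hasDerivAt_sqBr (hc : 0 ≤ cOf a) {z : ℂ} (hz : √(2 * cOf a) < |z.im|) :
    HasDerivAt (sqBr a) (z / sqBr a z) z := by
  rcases lt_abs.1 hz with hz | hz
  · exact hasDerivAt_sqBr_of_lt_im hc hz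
  have hz' : √(2 * cOf a) < (-z).im := by simpa using hz
  have hodd : sqBr a =ᶠ[𝓝 z] fun w => -sqBr a (-w) := by
    filter_upwards [continuous_im.continuousAt.eventually_lt continuousAt_const
      (show z.im < -√(2 * cOf a) by linarith)] with w hw
    simpa using sqBr_neg (a := a) (z := -w) (by rw [neg_im]; linarith)
  refine ((hasDerivAt_sqBr_of_lt_im hc hz').comp z (hasDerivAt_neg z)).neg.congr_of_eventuallyEq
    hodd |>.congr_deriv ?_
  rw [← neg_neg z, sqBr_neg hz', neg_neg]
  ring

theorem sqBr_I (hc₀ : 0 ≤ cOf a) (hc₁ : 2 * cOf a < 1) :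
    sqBr a I = I * √(1 - 2 * cOf a) := by
  set s : ℝ := √(2 * cOf a)
  have hs1 : s < 1 := by rw [Real.sqrt_lt' one_pos]; linarith
  have hs0 : 0 ≤ s := Real.sqrt_nonneg _
  have hp : -I * (I + I * s) = ((1 + s : ℝ) : ℂ) := by
    push_cast; linear_combination (-1 - (s : ℂ)) * I_sq
  have hm : -I * (I - I * s) = ((1 - s : ℝ) : ℂ) := by
    push_cast; linear_combination (-1 + (s : ℂ)) * I_sq
  have hs2 : s ^ 2 = 2 * cOf a := Real.sq_sqrt (by linarith)
  rw [sqBr_eq, hp, hm, exp_half_log_add_half_log_ofReal (by linarith) (by linarith),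
    show (1 + s) * (1 - s) = 1 - 2 * cOf a by linear_combination -hs2]

theorem sqBr_neg_I (hc₀ : 0 ≤ cOf a) (hc₁ : 2 * cOf a < 1) :
    sqBr a (-I) = -(I * √(1 - 2 * cOf a)) := by
  rw [sqBr_neg (by rw [I_im, Real.sqrt_lt' one_pos]; linarith), sqBr_I hc₀ hc₁]

theorem hasDerivAt_Gbr (hc : 0 ≤ cOf a) {z : ℂ} (hz : √(2 * cOf a) < |z.im|) :
    HasDerivAt (Gbr a) ((1 - z / sqBr a z) / √(2 * cOf a)) z :=
  ((hasDerivAt_id' z).sub (hasDerivAt_sqBr hc hz)).div_const _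

theorem hasDerivAt_comp_Gbr (hc : 0 ≤ cOf a) {ℓ : ℂ → ℂ} {z : ℂ} (hz : √(2 * cOf a) < |z.im|)
    (hG : Gbr a z ≠ 0) (hℓ : HasDerivAt ℓ (Gbr a z)⁻¹ (Gbr a z)) :
    HasDerivAt (fun w => ℓ (Gbr a w)) (-(sqBr a z)⁻¹) z := by
  refine (hℓ.comp z (hasDerivAt_Gbr hc hz)).congr_deriv ?_
  have hs : (√(2 * cOf a) : ℂ) ≠ 0 := by rintro hs; rw [Gbr, hs, div_zero] at hG; exact hG rfl
  have hzS : z - sqBr a z ≠ 0 := by rintro h; rw [Gbr, h, zero_div] at hG; exact hG rfl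
  have hS := sqBr_ne_zero (a := a) z
  rw [Gbr]
  field_simp
  ring

end Branches

section Saddle

variable {a : ℝ}

/-- `ω * dgxi a ξ ω` is the left-hand side of `saddleEq a ξ ξ ω`. -/
noncomputable def dgxi (a ξ : ℝ) (ω : ℂ) : ℂ :=
  ω⁻¹ + ξ / sqBr a ω + ξ / (ω ^ 2 * sqBr a ω⁻¹)

theorem hasDerivAt_gxi (hc : 0 ≤ cOf a) (ξ : ℝ) {ω : ℂ} (h₁ : √(2 * cOf a) < ω.im)
    (h₂ : ω⁻¹.im < -√(2 * cOf a)) (h₃ : -I * Gbr a ω ∈ slitPlane)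
    (h₄ : -Gbr a ω⁻¹ ∈ slitPlane) :
    HasDerivAt (gxi a ξ) (dgxi a ξ ω) ω := by
  have hs : 0 ≤ √(2 * cOf a) := Real.sqrt_nonneg _
  have hω : ω ≠ 0 := by rintro rfl; rw [zero_im] at h₁; linarith
  have dL : HasDerivAt Lbr ω⁻¹ ω :=
    hasDerivAt_Lbr (by rw [mem_slitPlane_iff]; left; simp; linarith)
  have dG : HasDerivAt (fun w => Lbr (Gbr a w)) (-(sqBr a ω)⁻¹) ω :=
    hasDerivAt_comp_Gbr hc (by rwa [abs_of_pos (by linarith)])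
      (by rintro h; simp [h] at h₃) (hasDerivAt_Lbr h₃)
  have dGinv : HasDerivAt (fun w => L3 (Gbr a w⁻¹)) (-(sqBr a ω⁻¹)⁻¹ * -(ω ^ 2)⁻¹) ω :=
    (hasDerivAt_comp_Gbr hc (by rw [abs_of_neg (by linarith)]; linarith)
      (by rintro h; simp [h] at h₄) (hasDerivAt_L3 h₄)).comp ω (hasDerivAt_inv hω)
  refine ((dL.sub (dG.const_mul (ξ : ℂ))).add (dGinv.const_mul (ξ : ℂ))).congr_deriv ?_
  rw [dgxi]
  ring

theorem Gbr_I (hc₀ : 0 ≤ cOf a) (hc₁ : 2 * cOf a < 1) :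
    Gbr a I = I * ((1 - √(1 - 2 * cOf a)) / √(2 * cOf a) : ℝ) := by
  rw [Gbr, sqBr_I hc₀ hc₁]
  push_cast
  ring

theorem Gbr_neg_I (hc₀ : 0 ≤ cOf a) (hc₁ : 2 * cOf a < 1) :
    Gbr a (-I) = -(I * ((1 - √(1 - 2 * cOf a)) / √(2 * cOf a) : ℝ)) := by
  rw [Gbr, sqBr_neg_I hc₀ hc₁]
  push_cast
  ring

theorem eventually_hasDerivAt_gxi (hc₀ : 0 < cOf a) (hc₁ : 2 * cOf a < 1) (ξ : ℝ) :
    ∀ᶠ ω in 𝓝 I, HasDerivAt (gxi a ξ) (dgxi a ξ ω) ω := by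
  have hs1 : √(2 * cOf a) < 1 := by rw [Real.sqrt_lt' one_pos]; linarith
  have hr1 : √(1 - 2 * cOf a) < 1 := by rw [Real.sqrt_lt' one_pos]; linarith
  have hG : 0 < (1 - √(1 - 2 * cOf a)) / √(2 * cOf a) :=
    div_pos (by linarith) (Real.sqrt_pos.2 (by linarith))
  have hinv : ContinuousAt (fun ω : ℂ => ω⁻¹) I := continuousAt_inv₀ I_ne_zero
  have h₁ : ∀ᶠ ω in 𝓝 I, √(2 * cOf a) < ω.im :=
    continuousAt_const.eventually_lt continuous_im.continuousAt (by rwa [I_im])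
  have h₂ : ∀ᶠ ω in 𝓝 I, ω⁻¹.im < -√(2 * cOf a) :=
    (continuous_im.continuousAt.comp hinv).eventually_lt continuousAt_const
      (by rw [Function.comp_apply, inv_I, neg_im, I_im]; linarith)
  have h₃ : ∀ᶠ ω in 𝓝 I, -I * Gbr a ω ∈ slitPlane := by
    refine (continuousAt_const.mul (hasDerivAt_Gbr hc₀.le (z := I)
      (by simpa using hs1)).continuousAt).eventually_mem (isOpen_slitPlane.mem_nhds ?_)
    show -I * Gbr a I ∈ slitPlane
    rw [Gbr_I hc₀.le hc₁, ← mul_assoc, neg_mul, I_mul_I, neg_neg, one_mul, ofReal_mem_slitPlane]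
    exact hG
  have h₄ : ∀ᶠ ω in 𝓝 I, -Gbr a ω⁻¹ ∈ slitPlane := by
    refine ((hasDerivAt_Gbr hc₀.le (z := -I) (by simpa using hs1)).continuousAt.comp_of_eq hinv
      inv_I).neg.eventually_mem (isOpen_slitPlane.mem_nhds ?_)
    show -Gbr a I⁻¹ ∈ slitPlane
    rw [inv_I, Gbr_neg_I hc₀.le hc₁, neg_neg, mem_slitPlane_iff]
    right
    rw [I_mul_im, ofReal_re]
    exact hG.ne'
  filter_upwards [h₁, h₂, h₃, h₄] with ω using hasDerivAt_gxi hc₀.le ξ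

theorem dgxi_I (hc₀ : 0 ≤ cOf a) (hc₁ : 2 * cOf a < 1) (ξ : ℝ) :
    dgxi a ξ I = -I * (1 + 2 * ξ / √(1 - 2 * cOf a)) := by
  have hr : (√(1 - 2 * cOf a) : ℂ) ≠ 0 := by exact_mod_cast (Real.sqrt_pos.2 (by linarith)).ne'
  rw [dgxi, inv_I, sqBr_I hc₀ hc₁, sqBr_neg_I hc₀ hc₁]
  field_simp
  linear_combination ξ * (2 * I ^ 2 - 1) * I_sq

theorem hasDerivAt_dgxi_I (hc₀ : 0 ≤ cOf a) (hc₁ : 2 * cOf a < 1) (ξ : ℝ) :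
    HasDerivAt (dgxi a ξ) (1 + 2 * ξ / √(1 - 2 * cOf a)) I := by
  have hs1 : √(2 * cOf a) < 1 := by rw [Real.sqrt_lt' one_pos]; linarith
  have hr : (√(1 - 2 * cOf a) : ℂ) ≠ 0 := by exact_mod_cast (Real.sqrt_pos.2 (by linarith)).ne'
  have dS := hasDerivAt_sqBr hc₀ (z := I) (by simpa using hs1)
  have dF := (hasDerivAt_sqBr hc₀ (z := I⁻¹) (by simpa using hs1)).comp I
    (hasDerivAt_inv I_ne_zero)
  have hF : I ^ 2 * sqBr a I⁻¹ ≠ 0 := mul_ne_zero (by simp) (sqBr_ne_zero _)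
  refine (((hasDerivAt_inv I_ne_zero).add
    ((hasDerivAt_const I (ξ : ℂ)).div dS (sqBr_ne_zero I))).add
    ((hasDerivAt_const I (ξ : ℂ)).div ((hasDerivAt_pow 2 I).mul dF) hF)).congr_deriv ?_
  simp only [Function.comp_apply, Pi.mul_apply]
  rw [inv_I, sqBr_I hc₀ hc₁, sqBr_neg_I hc₀ hc₁]
  field_simp
  set r : ℂ := (√(1 - 2 * cOf a) : ℂ)
  linear_combination (-(2 * r ^ 2 * ξ + r ^ 3) * I ^ 4 + (2 * r ^ 2 * ξ - ξ) * I ^ 2 + ξ) * I_sq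

end Saddle

/-- For every `ξ ∈ ℝ`, the function `g_ξ` has a double critical point at
`ω = i`, i.e. `g_ξ′(i) = 0` and `g_ξ″(i) = 0`, if and only if `ξ = -(1/2)√(1-2c)`. -/
theorem statement8 (a : ℝ) (ha0 : 0 < a) (ha1 : a < 1) (ξ : ℝ) :
    (deriv (gxi a ξ) Complex.I = 0 ∧ iteratedDeriv 2 (gxi a ξ) Complex.I = 0) ↔
      ξ = -(1 / 2) * Real.sqrt (1 - 2 * cOf a) := by
  have hc₀ := cOf_pos ha0
  have hc₁ := two_mul_cOf_lt_one ha1.ne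
  have hr : 0 < √(1 - 2 * cOf a) := Real.sqrt_pos.2 (by linarith)
  have hg := eventually_hasDerivAt_gxi hc₀ hc₁ ξ
  have hg' : deriv (gxi a ξ) =ᶠ[𝓝 I] dgxi a ξ := hg.mono fun ω h => h.deriv
  rw [hg.self_of_nhds.deriv, dgxi_I hc₀.le hc₁, iteratedDeriv_succ, iteratedDeriv_one,
    hg'.deriv_eq, (hasDerivAt_dgxi_I hc₀.le hc₁ ξ).deriv]
  have hu : (1 + 2 * ξ / √(1 - 2 * cOf a) : ℂ) = 0 ↔ ξ = -(1 / 2) * √(1 - 2 * cOf a) := by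
    rw [← ofReal_ofNat, ← ofReal_mul, ← ofReal_div, ← ofReal_one, ← ofReal_add, ofReal_eq_zero]
    constructor <;> intro h
    · field_simp at h; linarith
    · rw [h]; field_simp; ring
  simp [hu, I_ne_zero]
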